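/- Let A be an absolute retract in a congruence modular variety satisfying the commutator identity (C1): α ∧ [β,β] = [α ∧ β, β]. Then A is isomorphic to the product of a centerless algebra and an abelian algebra. In particular, if A is also directly indecomposable, then A is either centerless or abelian. -/

import Mathlib

/-- An algebraic signature: a type of operation symbols with finite arities. -/
structure Signature where
  ops : Type
  arity : ops → ℕ

/-- An algebra for a signature. -/
structure SAlgebra (S : Signature) where
  carrier : Type
  interp : (o : S.ops) → (Fin (S.arity o) → carrier) → carrier

namespace SAlgebra

variable {S : Signature}

/-- Binary product of algebras. -/
def prod (A B : SAlgebra S) : SAlgebra S where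
  carrier := A.carrier × B.carrier
  interp o x := (A.interp o fun i => (x i).1, B.interp o fun i => (x i).2)

/-- Product of a family of algebras. -/
def pi {ι : Type} (A : ι → SAlgebra S) : SAlgebra S where
  carrier := ∀ i, (A i).carrier
  interp o x i := (A i).interp o fun j => x j i

end SAlgebra

/-- Homomorphisms of algebras. -/
structure SHom {S : Signature} (A B : SAlgebra S) where
  toFun : A.carrier → B.carrier
  map : ∀ (o : S.ops) (x : Fin (S.arity o) → A.carrier),
    toFun (A.interp o x) = B.interp o fun i => toFun (x i)

namespace SHom

variable {S : Signature}

/-- Composition of homomorphisms. -/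
def comp {A B C : SAlgebra S} (g : SHom B C) (f : SHom A B) : SHom A C where
  toFun := g.toFun ∘ f.toFun
  map o x := by simp [Function.comp, f.map, g.map]

/-- The `i`-th projection of a product. -/
def proj {ι : Type} (A : ι → SAlgebra S) (i : ι) : SHom (SAlgebra.pi A) (A i) where
  toFun x := x i
  map _ _ := rfl

end SHom

/-- Congruences of an algebra. -/
structure SCon {S : Signature} (A : SAlgebra S) where
  r : A.carrier → A.carrier → Prop
  iseqv : Equivalence r
  compat : ∀ (o : S.ops) (x y : Fin (S.arity o) → A.carrier),
    (∀ i, r (x i) (y i)) → r (A.interp o x) (A.interp o y)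

namespace SCon

variable {S : Signature} {A : SAlgebra S}

instance : PartialOrder (SCon A) where
  le c d := ∀ x y, c.r x y → d.r x y
  le_refl _ _ _ h := h
  le_trans _ _ _ h h' x y hx := h' x y (h x y hx)
  le_antisymm a b h h' := by
    cases a; cases b
    have : ∀ x y : A.carrier, _ ↔ _ := fun x y => Iff.intro (h x y) (h' x y)
    simp only [SCon.mk.injEq]
    funext x y
    exact propext (this x y)

instance : InfSet (SCon A) :=
  ⟨fun s =>
    { r := fun x y => ∀ c ∈ s, c.r x y
      iseqv := ⟨fun x c _ => c.iseqv.refl x, fun h c hc => c.iseqv.symm (h c hc),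
        fun h1 h2 c hc => c.iseqv.trans (h1 c hc) (h2 c hc)⟩
      compat := fun o x y h c hc => c.compat o x y fun i => h i c hc }⟩

instance : CompleteLattice (SCon A) :=
  completeLatticeOfInf _ (fun s =>
    ⟨fun c hc x y h => h c hc, fun b hb x y h c hc => hb hc x y h⟩)

/-- Restriction (inverse image) of a congruence along a homomorphism. -/
def comap {B : SAlgebra S} (f : SHom A B) (θ : SCon B) : SCon A where
  r x y := θ.r (f.toFun x) (f.toFun y)
  iseqv := ⟨fun _ => θ.iseqv.refl _, θ.iseqv.symm, θ.iseqv.trans⟩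
  compat o x y h := by
    show θ.r (f.toFun (A.interp o x)) (f.toFun (A.interp o y))
    rw [f.map, f.map]
    exact θ.compat o _ _ h

/-- Product of two congruences. -/
def prodCon {A B : SAlgebra S} (φ : SCon A) (ψ : SCon B) : SCon (A.prod B) where
  r x y := φ.r x.1 y.1 ∧ ψ.r x.2 y.2
  iseqv := ⟨fun _ => ⟨φ.iseqv.refl _, ψ.iseqv.refl _⟩,
    fun h => ⟨φ.iseqv.symm h.1, ψ.iseqv.symm h.2⟩,
    fun h h' => ⟨φ.iseqv.trans h.1 h'.1, ψ.iseqv.trans h.2 h'.2⟩⟩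
  compat o x y h := ⟨φ.compat o _ _ fun i => (h i).1, ψ.compat o _ _ fun i => (h i).2⟩

/-- Product of a family of congruences. -/
def piCon {ι : Type} {A : ι → SAlgebra S} (φ : ∀ i, SCon (A i)) : SCon (SAlgebra.pi A) where
  r x y := ∀ i, (φ i).r (x i) (y i)
  iseqv := ⟨fun _ i => (φ i).iseqv.refl _, fun h i => (φ i).iseqv.symm (h i),
    fun h h' i => (φ i).iseqv.trans (h i) (h' i)⟩
  compat o x y h i := (φ i).compat o _ _ fun j => h j i

end SCon

/-- Terms in `n` variables over a signature. -/
inductive STerm (S : Signature) : ℕ → Type where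
  | var : {n : ℕ} → Fin n → STerm S n
  | app : {n : ℕ} → (o : S.ops) → (Fin (S.arity o) → STerm S n) → STerm S n

/-- Evaluation of a term in an algebra. -/
def STerm.eval {S : Signature} (A : SAlgebra S) {n : ℕ} : STerm S n → (Fin n → A.carrier) → A.carrier
  | .var i, x => x i
  | .app o t, x => A.interp o fun j => (t j).eval A x

/-- The term-condition centralizer relation `C(α, β; δ)`. -/
def Centralizes {S : Signature} (A : SAlgebra S) (α β δ : SCon A) : Prop :=
  ∀ (n m : ℕ) (t : STerm S (n + m)) (a b : Fin n → A.carrier) (u v : Fin m → A.carrier),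
    (∀ i, α.r (a i) (b i)) → (∀ j, β.r (u j) (v j)) →
    δ.r (t.eval A (Fin.append a u)) (t.eval A (Fin.append a v)) →
    δ.r (t.eval A (Fin.append b u)) (t.eval A (Fin.append b v))

/-- The commutator `[α, β]`: the least congruence `δ` with `C(α, β; δ)`. -/
def conCommutator {S : Signature} (A : SAlgebra S) (α β : SCon A) : SCon A :=
  sInf {δ | Centralizes A α β δ}

/-- The center of an algebra: the largest central congruence. -/
def conCenter {S : Signature} (A : SAlgebra S) : SCon A :=
  sSup {θ | conCommutator A θ ⊤ = ⊥}

/-- A class of algebras is a variety iff it is closed under subalgebras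
(isomorphic copies included), homomorphic images and products. -/
def IsVariety {S : Signature} (V : SAlgebra S → Prop) : Prop :=
  (∀ (A B : SAlgebra S) (e : SHom A B), Function.Injective e.toFun → V B → V A) ∧
  (∀ (A B : SAlgebra S) (p : SHom A B), Function.Surjective p.toFun → V A → V B) ∧
  (∀ (ι : Type) (A : ι → SAlgebra S), (∀ i, V (A i)) → V (SAlgebra.pi A))

/-- A congruence modular variety. -/
def IsCongruenceModularVariety {S : Signature} (V : SAlgebra S → Prop) : Prop :=
  IsVariety V ∧ ∀ A : SAlgebra S, V A → IsModularLattice (SCon A)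

/-- A Gumm difference term for the class `V`:  `d(x,y,y) = x` holds identically,
and `d(x,x,y) = y` whenever `x θ y` for an abelian congruence `θ`. -/
def IsGummDifferenceTerm {S : Signature} (V : SAlgebra S → Prop) (d : STerm S 3) : Prop :=
  (∀ A : SAlgebra S, V A → ∀ x y : A.carrier, d.eval A ![x, y, y] = x) ∧
  (∀ A : SAlgebra S, V A → ∀ θ : SCon A, conCommutator A θ θ = ⊥ →
    ∀ x y : A.carrier, θ.r x y → d.eval A ![x, x, y] = y)

/-- `R` is an absolute retract in `V`: every embedding of `R` into a member of `V`
admits a retraction. -/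
def IsAbsoluteRetract {S : Signature} (V : SAlgebra S → Prop) (R : SAlgebra S) : Prop :=
  ∀ A : SAlgebra S, V A → ∀ e : SHom R A, Function.Injective e.toFun →
    ∃ p : SHom A R, ∀ x, p.toFun (e.toFun x) = x

/-- An embedding is essential iff every congruence of the codomain restricting
trivially is trivial. -/
def IsEssential {S : Signature} {A B : SAlgebra S} (e : SHom A B) : Prop :=
  ∀ θ : SCon B, SCon.comap e θ = ⊥ → θ = ⊥

/-- A congruence `α` is dense: any congruence meeting it trivially is trivial. -/
def DenseCon {S : Signature} {A : SAlgebra S} (α : SCon A) : Prop :=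
  ∀ θ : SCon A, θ ⊓ α = ⊥ → θ = ⊥

/-- The setoid underlying a congruence. -/
def SCon.setoid {S : Signature} {A : SAlgebra S} (θ : SCon A) : Setoid A.carrier :=
  ⟨θ.r, θ.iseqv⟩

/-- Quotient algebra. -/
noncomputable def SAlgebra.quot {S : Signature} (A : SAlgebra S) (θ : SCon A) : SAlgebra S where
  carrier := Quotient θ.setoid
  interp o x := Quotient.mk θ.setoid (A.interp o fun i => (x i).out)

theorem SCon.out_rel {S : Signature} {A : SAlgebra S} (θ : SCon A) (a : A.carrier) :
    θ.r (Quotient.out (Quotient.mk θ.setoid a)) a :=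
  @Quotient.exact _ θ.setoid _ _ (Quotient.out_eq _)

/-- The canonical quotient homomorphism. -/
def SHom.quotHom {S : Signature} (A : SAlgebra S) (θ : SCon A) : SHom A (A.quot θ) where
  toFun := Quotient.mk θ.setoid
  map o x := Quotient.sound (θ.compat o _ _ fun i => θ.iseqv.symm (θ.out_rel (x i)))

/-- Product map of a family of homomorphisms. -/
def SHom.piMap {S : Signature} {ι : Type} {A B : ι → SAlgebra S} (f : ∀ i, SHom (A i) (B i)) :
    SHom (SAlgebra.pi A) (SAlgebra.pi B) where
  toFun x i := (f i).toFun (x i)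
  map o x := funext fun i => (f i).map o fun j => x j i

/-- The congruence `φ/θ` on the quotient `A/θ`, for `θ ≤ φ`. -/
def SCon.quotCon {S : Signature} {A : SAlgebra S} (θ φ : SCon A) (h : θ ≤ φ) :
    SCon (A.quot θ) where
  r a b := φ.r a.out b.out
  iseqv := ⟨fun _ => φ.iseqv.refl _, φ.iseqv.symm, φ.iseqv.trans⟩
  compat o x y hxy := by
    have hx := h _ _ (θ.out_rel (A.interp o fun i => (x i).out))
    have hy := h _ _ (θ.out_rel (A.interp o fun i => (y i).out))
    exact φ.iseqv.trans hx (φ.iseqv.trans (φ.compat o _ _ hxy) (φ.iseqv.symm hy))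

/-- Finitely subdirectly irreducible: `⊥` is meet irreducible in the congruence lattice. -/
def IsFSI {S : Signature} (A : SAlgebra S) : Prop :=
  ∀ θ φ : SCon A, θ ⊓ φ = ⊥ → θ = ⊥ ∨ φ = ⊥

/-- Subdirectly irreducible: the congruence lattice has a monolith. -/
def IsSubdirectlyIrreducible {S : Signature} (A : SAlgebra S) : Prop :=
  ∃ μ : SCon A, μ ≠ ⊥ ∧ ∀ θ : SCon A, θ ≠ ⊥ → μ ≤ θ

/-!
By (C1), `[α, 1] = α ∧ [1, 1]`; hence the center `ζ` meets `[1, 1]` trivially and `A/ζ` is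
centerless. Zorn gives `ψ ≥ [1, 1]` maximal with `ψ ∧ ζ = 0`, so `A/ψ` is abelian and
`e = (q_ζ, q_ψ)` embeds `A` into `A/ζ × A/ψ`; let `p` be a retraction and `Θ = ker p`.
Since the second factor is abelian, `η₁ = ker π₁` centralizes everything modulo any congruence,
so `e⁻¹(Θ ∨ η₁)` is central, i.e. `≤ ζ`, which forces `Θ ≤ η₁`. By modularity
`e⁻¹(Θ ∨ η₂) ∧ ζ = e⁻¹(Θ) = 0`, so maximality gives `e⁻¹(Θ ∨ η₂) = ψ`; the two pullbacks of
`Θ ∨ ηᵢ` being `ker qᵢ` make `e` onto. Both centrality facts come from the congruence of `C × C`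
generated by the diagonal, which, for abelian `C` in a modular variety, meets `ker π₁` trivially.
-/

open Relation Function

variable {S : Signature}

theorem Fin.comp_append {α β : Type*} {n m : ℕ} (f : α → β) (a : Fin n → α)
    (u : Fin m → α) :
    f ∘ Fin.append a u = Fin.append (f ∘ a) (f ∘ u) := by
  funext k
  refine Fin.addCases (fun i => ?_) (fun j => ?_) k <;> simp

namespace SHom

variable {A B C : SAlgebra S}

def fst (A B : SAlgebra S) : SHom (A.prod B) A := ⟨Prod.fst, fun _ _ => rfl⟩

def snd (A B : SAlgebra S) : SHom (A.prod B) B := ⟨Prod.snd, fun _ _ => rfl⟩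

def diag (A : SAlgebra S) : SHom A (A.prod A) := ⟨fun x => (x, x), fun _ _ => rfl⟩

def pair (f : SHom A B) (g : SHom A C) : SHom A (B.prod C) where
  toFun x := (f.toFun x, g.toFun x)
  map o x := by rw [f.map, g.map]; rfl

theorem map_eval (f : SHom A B) {n : ℕ} (t : STerm S n) (x : Fin n → A.carrier) :
    f.toFun (t.eval A x) = t.eval B (f.toFun ∘ x) := by
  induction t with
  | var i => rfl
  | app o ts ih => exact (f.map o _).trans (congrArg _ (funext ih))

theorem map_eval_append (f : SHom A B) {n m : ℕ} (t : STerm S (n + m)) (a : Fin n → A.carrier)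
    (u : Fin m → A.carrier) :
    f.toFun (t.eval A (Fin.append a u)) =
      t.eval B (Fin.append (f.toFun ∘ a) (f.toFun ∘ u)) := by
  rw [map_eval, Fin.comp_append]

theorem quotHom_surjective (A : SAlgebra S) (θ : SCon A) : Surjective (quotHom A θ).toFun :=
  Quotient.mk_surjective

theorem quotHom_eq_iff {θ : SCon A} {x y : A.carrier} :
    (quotHom A θ).toFun x = (quotHom A θ).toFun y ↔ θ.r x y :=
  ⟨@Quotient.exact _ θ.setoid _ _, @Quotient.sound _ θ.setoid _ _⟩

end SHom

theorem STerm.eval_prod_append {A B : SAlgebra S} {n m : ℕ} (t : STerm S (n + m))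
    (a : Fin n → (A.prod B).carrier) (u : Fin m → (A.prod B).carrier) :
    t.eval (A.prod B) (Fin.append a u) =
      (t.eval A (Fin.append (fun i => (a i).1) (fun j => (u j).1)),
        t.eval B (Fin.append (fun i => (a i).2) (fun j => (u j).2))) :=
  Prod.ext ((SHom.fst A B).map_eval_append t a u) ((SHom.snd A B).map_eval_append t a u)

namespace SCon

variable {A B C : SAlgebra S}

theorem ext {c d : SCon A} (h : ∀ x y, c.r x y ↔ d.r x y) : c = d :=
  le_antisymm (fun x y => (h x y).1) (fun x y => (h x y).2)

theorem top_r (x y : A.carrier) : (⊤ : SCon A).r x y := fun _ h => h.elim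

theorem bot_r_iff {x y : A.carrier} : (⊥ : SCon A).r x y ↔ x = y :=
  ⟨fun h => h ⟨Eq, eq_equivalence, fun _ _ _ h => congrArg _ (funext h)⟩ trivial,
    fun h => h ▸ (⊥ : SCon A).iseqv.refl x⟩

theorem eq_bot_of_r {c : SCon A} (h : ∀ x y, c.r x y → x = y) : c = ⊥ :=
  le_bot_iff.1 fun x y hxy => bot_r_iff.2 (h x y hxy)

theorem inf_r_iff {c d : SCon A} {x y : A.carrier} : (c ⊓ d).r x y ↔ c.r x y ∧ d.r x y :=
  ⟨fun h => ⟨h c (.inl rfl), h d (.inr rfl)⟩,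
    fun ⟨hc, hd⟩ _ he => he.elim (· ▸ hc) (fun he => (Set.mem_singleton_iff.1 he) ▸ hd)⟩

theorem eval_r (θ : SCon A) {n : ℕ} (t : STerm S n) {x y : Fin n → A.carrier}
    (h : ∀ i, θ.r (x i) (y i)) : θ.r (t.eval A x) (t.eval A y) := by
  induction t with
  | var i => exact h i
  | app o ts ih => exact θ.compat o _ _ ih

theorem append_r (θ : SCon A) {n m : ℕ} {a b : Fin n → A.carrier} {u v : Fin m → A.carrier}
    (hab : ∀ i, θ.r (a i) (b i)) (huv : ∀ j, θ.r (u j) (v j)) (k : Fin (n + m)) :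
    θ.r (Fin.append a u k) (Fin.append b v k) :=
  Fin.addCases (motive := fun k => θ.r (Fin.append a u k) (Fin.append b v k))
    (fun i => by simpa using hab i) (fun j => by simpa using huv j) k

theorem update_r (θ : SCon A) {n : ℕ} (x : Fin n → A.carrier) (i : Fin n) {a b : A.carrier}
    (h : θ.r a b) (j : Fin n) : θ.r (update x i a j) (update x i b j) := by
  rcases eq_or_ne j i with rfl | hj
  · simpa using h
  · simpa [hj] using θ.iseqv.refl (x j)

def ker (f : SHom A B) : SCon A where
  r x y := f.toFun x = f.toFun y
  iseqv := ⟨fun _ => rfl, Eq.symm, Eq.trans⟩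
  compat o x y h := by rw [f.map, f.map, funext h]

theorem comap_top (f : SHom A B) : comap f ⊤ = ⊤ := top_unique fun _ _ _ => top_r _ _

theorem comap_bot (f : SHom A B) : comap f ⊥ = ker f := ext fun _ _ => bot_r_iff

theorem comap_inf (f : SHom A B) (c d : SCon B) : comap f (c ⊓ d) = comap f c ⊓ comap f d :=
  ext fun _ _ => by simp only [comap, inf_r_iff]

theorem comap_le_comap_iff {f : SHom A B} (hf : Surjective f.toFun) {c d : SCon B} :
    comap f c ≤ comap f d ↔ c ≤ d := by
  refine ⟨fun h x y hxy => ?_, fun h x y => h _ _⟩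
  obtain ⟨x, rfl⟩ := hf x
  obtain ⟨y, rfl⟩ := hf y
  exact h x y hxy

theorem ker_quotHom (θ : SCon A) : ker (SHom.quotHom A θ) = θ :=
  ext fun _ _ => SHom.quotHom_eq_iff

theorem comap_quotHom_quotCon {θ φ : SCon A} (h : θ ≤ φ) :
    comap (SHom.quotHom A θ) (quotCon θ φ h) = φ :=
  have hout : ∀ x, φ.r (Quotient.mk θ.setoid x).out x := fun x => h _ _ (θ.out_rel x)
  ext fun x y => ⟨fun hxy => φ.iseqv.trans (φ.iseqv.symm (hout x)) (φ.iseqv.trans hxy (hout y)),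
    fun hxy => φ.iseqv.trans (hout x) (φ.iseqv.trans hxy (φ.iseqv.symm (hout y)))⟩

theorem eq_top_of_subsingleton_quot {θ : SCon A} (h : Subsingleton (A.quot θ).carrier) :
    θ = ⊤ :=
  top_unique fun _ _ _ => SHom.quotHom_eq_iff.1 (Subsingleton.elim _ _)

theorem ker_fst_inf_ker_snd_eq_bot : ker (SHom.fst B C) ⊓ ker (SHom.snd B C) = ⊥ :=
  eq_bot_of_r fun _ _ h => Prod.ext (inf_r_iff.1 h).1 (inf_r_iff.1 h).2

end SCon

theorem Relation.ReflTransGen.lift_update {γ ε : Type*} {R : γ → γ → Prop}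
    {Q : ε → ε → Prop} {k : ℕ} (F : (Fin k → γ) → ε)
    (hF : ∀ x i a b, R a b → Q (F (update x i a)) (F (update x i b)))
    {x y : Fin k → γ} (h : ∀ i, ReflTransGen R (x i) (y i)) : ReflTransGen Q (F x) (F y) := by
  induction k with
  | zero => rw [Subsingleton.elim x y]
  | succ k ih =>
    obtain ⟨x₀, xs, rfl⟩ : ∃ x₀ xs, x = Fin.cons x₀ xs := ⟨_, _, (Fin.cons_self_tail x).symm⟩
    obtain ⟨y₀, ys, rfl⟩ : ∃ y₀ ys, y = Fin.cons y₀ ys := ⟨_, _, (Fin.cons_self_tail y).symm⟩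
    have head : ReflTransGen Q (F (Fin.cons x₀ xs)) (F (Fin.cons y₀ xs)) :=
      (by simpa using h 0 : ReflTransGen R x₀ y₀).lift (fun c => F (Fin.cons c xs))
        fun a b hab => by simpa only [Fin.update_cons_zero] using hF (Fin.cons x₀ xs) 0 a b hab
    exact head.trans (ih (fun z => F (Fin.cons y₀ z))
      (fun z i a b hab => by simpa only [Fin.cons_update] using hF _ i.succ a b hab)
      fun i => by simpa using h i.succ)

namespace SCon

variable {A : SAlgebra S}

def ofReflTransGen (R : A.carrier → A.carrier → Prop) (symm : ∀ {x y}, R x y → R y x)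
    (compat : ∀ o x i a b, R a b → R (A.interp o (update x i a)) (A.interp o (update x i b))) :
    SCon A where
  r := ReflTransGen R
  iseqv := ⟨fun _ => .refl,
    fun h => ReflTransGen.mono (fun _ _ => symm) _ _ (ReflTransGen.swap _ _ h), .trans⟩
  compat o _ _ h := ReflTransGen.lift_update (A.interp o) (compat o) h

theorem reflTransGen_of_sSup_r {s : Set (SCon A)} {x y : A.carrier} (h : (sSup s).r x y) :
    ReflTransGen (fun a b => ∃ θ ∈ s, θ.r a b) x y := by
  let U : SCon A := ofReflTransGen (fun a b => ∃ θ ∈ s, θ.r a b)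
    (fun ⟨θ, hθ, hxy⟩ => ⟨θ, hθ, θ.iseqv.symm hxy⟩)
    (fun o x i _ _ ⟨θ, hθ, hab⟩ => ⟨θ, hθ, θ.compat o _ _ (θ.update_r x i hab)⟩)
  exact (sSup_le fun θ hθ a b hab => ReflTransGen.single ⟨θ, hθ, hab⟩ : sSup s ≤ U) x y h

theorem exists_r_of_sSup_r_of_isChain {c : Set (SCon A)} (hc : IsChain (· ≤ ·) c)
    {x y : A.carrier} (h : (sSup c).r x y) : x = y ∨ ∃ θ ∈ c, θ.r x y := by
  have hchain := reflTransGen_of_sSup_r h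
  clear h
  induction hchain with
  | refl => exact .inl rfl
  | tail _ hstep ih =>
    obtain ⟨θ', hθ', hzy⟩ := hstep
    rcases ih with rfl | ⟨θ, hθ, hxz⟩
    · exact .inr ⟨θ', hθ', hzy⟩
    rcases hc.total hθ hθ' with hle | hle
    · exact .inr ⟨θ', hθ', θ'.iseqv.trans (hle _ _ hxz) hzy⟩
    · exact .inr ⟨θ, hθ, θ.iseqv.trans hxz (hle _ _ hzy)⟩

theorem eq_of_sup_r {c d : SCon A} {P : A.carrier → Prop}
    (hc : ∀ x y, P x → c.r x y → y = x) (hd : ∀ x y, P x → d.r x y → y = x)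
    {x y : A.carrier} (hx : P x) (h : (c ⊔ d).r x y) : y = x := by
  rw [← sSup_pair] at h
  have hchain := reflTransGen_of_sSup_r h
  clear h
  induction hchain with
  | refl => rfl
  | tail _ hstep ih =>
    obtain ⟨θ, hθ | hθ, hzy⟩ := hstep <;> subst ih θ
    · exact hc _ _ hx hzy
    · exact hd _ _ hx hzy

theorem exists_maximal_inf_eq_bot {ν ζ : SCon A} (h : ν ⊓ ζ = ⊥) :
    ∃ ψ, ν ≤ ψ ∧ ψ ⊓ ζ = ⊥ ∧ ∀ γ, γ ⊓ ζ = ⊥ → ψ ≤ γ → γ = ψ := by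
  obtain ⟨ψ, hνψ, hψ⟩ := zorn_le_nonempty₀ {γ | γ ⊓ ζ = ⊥} (fun c hcs hc _ _ => by
    refine ⟨sSup c, eq_bot_of_r fun x y hxy => ?_, fun _ => le_sSup⟩
    obtain ⟨hs, hζ⟩ := inf_r_iff.1 hxy
    rcases exists_r_of_sSup_r_of_isChain hc hs with hxy | ⟨θ, hθ, hθxy⟩
    · exact hxy
    · exact bot_r_iff.1 ((hcs hθ : θ ⊓ ζ = ⊥) ▸ inf_r_iff.2 ⟨hθxy, hζ⟩)) ν h
  exact ⟨ψ, hνψ, hψ.prop, fun γ hγ hle => le_antisymm (hψ.2 hγ hle) hle⟩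

end SCon

namespace Centralizes

variable {A B : SAlgebra S}

theorem self_left (α β : SCon A) : Centralizes A α β α := fun _ _ t _ _ u v hab _ hp =>
  α.iseqv.trans
    (α.eval_r t (α.append_r (fun i => α.iseqv.symm (hab i)) fun j => α.iseqv.refl (u j)))
    (α.iseqv.trans hp (α.eval_r t (α.append_r hab fun j => α.iseqv.refl (v j))))

theorem comap (f : SHom A B) {α β δ : SCon B} (h : Centralizes B α β δ) :
    Centralizes A (SCon.comap f α) (SCon.comap f β) (SCon.comap f δ) := by
  intro n m t a b u v hab huv hp
  simp only [SCon.comap, f.map_eval_append] at hp ⊢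
  exact h n m t _ _ _ _ hab huv hp

theorem of_comap {f : SHom A B} (hf : Surjective f.toFun) {α β δ : SCon B}
    (h : Centralizes A (SCon.comap f α) (SCon.comap f β) (SCon.comap f δ)) :
    Centralizes B α β δ := by
  intro n m t a b u v hab huv hp
  have hsec : f.toFun ∘ surjInv hf = id := funext (surjInv_eq hf)
  have lift := h n m t (surjInv hf ∘ a) (surjInv hf ∘ b) (surjInv hf ∘ u) (surjInv hf ∘ v)
  simp only [SCon.comap, f.map_eval_append, ← Function.comp_assoc, hsec, id_comp] at lift
  exact lift (fun i => by simpa [surjInv_eq hf] using hab i)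
    (fun j => by simpa [surjInv_eq hf] using huv j) hp

theorem sSup {s : Set (SCon A)} {β δ : SCon A} (h : ∀ θ ∈ s, Centralizes A θ β δ) :
    Centralizes A (sSup s) β δ := by
  intro n m t a b u v hab huv
  let holds : (Fin n → A.carrier) → Prop := fun x =>
    δ.r (t.eval A (Fin.append x u)) (t.eval A (Fin.append x v))
  have : ReflTransGen (· → ·) (holds a) (holds b) :=
    ReflTransGen.lift_update holds
      (fun x i _ _ ⟨θ, hθ, hcd⟩ => h θ hθ n m t _ _ u v (θ.update_r x i hcd) huv)
      fun i => SCon.reflTransGen_of_sSup_r (hab i)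
  rwa [reflTransGen_eq_self] at this

theorem sup {c d β δ : SCon A} (hc : Centralizes A c β δ) (hd : Centralizes A d β δ) :
    Centralizes A (c ⊔ d) β δ := by
  rw [← sSup_pair]
  exact sSup (by rintro θ (rfl | rfl) <;> assumption)

end Centralizes

theorem conCommutator_le {A : SAlgebra S} {α β δ : SCon A} (h : Centralizes A α β δ) :
    conCommutator A α β ≤ δ :=
  sInf_le h

theorem centralizes_conCommutator {A : SAlgebra S} (α β : SCon A) :
    Centralizes A α β (conCommutator A α β) :=
  fun n m t a b u v hab huv hp δ hδ => hδ n m t a b u v hab huv (hp δ hδ)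

theorem conCommutator_eq_bot_iff {A : SAlgebra S} {α β : SCon A} :
    conCommutator A α β = ⊥ ↔ Centralizes A α β ⊥ :=
  ⟨fun h => h ▸ centralizes_conCommutator α β, fun h => le_bot_iff.1 (conCommutator_le h)⟩

section Center

variable {A : SAlgebra S}

theorem le_conCenter {θ : SCon A} (h : Centralizes A θ ⊤ ⊥) : θ ≤ conCenter A :=
  le_sSup (conCommutator_eq_bot_iff.2 h)

theorem centralizes_conCenter : Centralizes A (conCenter A) ⊤ ⊥ :=
  Centralizes.sSup fun _ hθ => conCommutator_eq_bot_iff.1 hθ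

theorem conCenter_inf_conCommutator_top_eq_bot
    (hC1 : ∀ α : SCon A, conCommutator A α ⊤ = α ⊓ conCommutator A ⊤ ⊤) :
    conCenter A ⊓ conCommutator A ⊤ ⊤ = ⊥ := by
  rw [← hC1, conCommutator_eq_bot_iff]
  exact centralizes_conCenter

theorem conCenter_quot_conCenter_eq_bot
    (hC1 : ∀ α : SCon A, conCommutator A α ⊤ = α ⊓ conCommutator A ⊤ ⊤) :
    conCenter (A.quot (conCenter A)) = ⊥ := by
  set q := SHom.quotHom A (conCenter A)
  refine le_bot_iff.1 (sSup_le fun θ hθ => ?_)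
  rw [← SCon.comap_le_comap_iff (SHom.quotHom_surjective A _), SCon.comap_bot, SCon.ker_quotHom]
  have hcomm : conCommutator A (SCon.comap q θ) ⊤ ≤ conCenter A := by
    have := (conCommutator_eq_bot_iff.1 hθ).comap q
    rw [SCon.comap_top, SCon.comap_bot, SCon.ker_quotHom] at this
    exact conCommutator_le this
  refine le_conCenter (conCommutator_eq_bot_iff.1 (le_bot_iff.1 ?_))
  calc conCommutator A (SCon.comap q θ) ⊤
      ≤ conCenter A ⊓ conCommutator A ⊤ ⊤ := le_inf hcomm (hC1 _ ▸ inf_le_right)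
    _ = ⊥ := conCenter_inf_conCommutator_top_eq_bot hC1

end Center

namespace STerm

def rename {n k : ℕ} (ρ : Fin n → Fin k) : STerm S n → STerm S k
  | .var i => .var (ρ i)
  | .app o ts => .app o fun j => (ts j).rename ρ

theorem eval_rename {W : SAlgebra S} {n k : ℕ} (ρ : Fin n → Fin k) (t : STerm S n)
    (x : Fin k → W.carrier) : (t.rename ρ).eval W x = t.eval W (x ∘ ρ) := by
  induction t with
  | var i => rfl
  | app o ts ih => exact congrArg (W.interp o) (funext ih)

theorem exists_interp_update_eval {W : SAlgebra S} {n m : ℕ} (t : STerm S (n + m))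
    (o : S.ops) (x : Fin (S.arity o) → W.carrier) (i : Fin (S.arity o)) :
    ∃ T : STerm S (n + (m + S.arity o)), ∀ c z,
      W.interp o (update x i (t.eval W (Fin.append c z))) =
        T.eval W (Fin.append c (Fin.append z x)) := by
  classical
  let ρ : Fin (n + m) → Fin (n + (m + S.arity o)) :=
    Fin.append (Fin.castAdd _) (Fin.natAdd n ∘ Fin.castAdd _)
  refine ⟨.app o fun j => if j = i then t.rename ρ else .var (Fin.natAdd n (Fin.natAdd m j)),
    fun c z => congrArg (W.interp o) (funext fun j => ?_)⟩
  rcases eq_or_ne j i with rfl | hj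
  · have hρ : Fin.append c (Fin.append z x) ∘ ρ = Fin.append c z := by
      funext k
      refine Fin.addCases (fun k => ?_) (fun k => ?_) k <;> simp [ρ]
    simp [eval_rename, hρ]
  · simp [hj, eval]

end STerm

section Diagonal

variable {C : SAlgebra S}

/-- One step of a Mal'cev chain for the congruence of `C × C` generated by the diagonal: a
polynomial translate of a tuple of diagonal pairs. -/
def DiagStep (C : SAlgebra S) (w w' : (C.prod C).carrier) : Prop :=
  ∃ (n m : ℕ) (t : STerm S (n + m)) (a b : Fin n → C.carrier)
    (z : Fin m → (C.prod C).carrier),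
    w = t.eval (C.prod C) (Fin.append ((SHom.diag C).toFun ∘ a) z) ∧
      w' = t.eval (C.prod C) (Fin.append ((SHom.diag C).toFun ∘ b) z)

def diagCon (C : SAlgebra S) : SCon (C.prod C) :=
  SCon.ofReflTransGen (DiagStep C)
    (fun ⟨n, m, t, a, b, z, hw, hw'⟩ => ⟨n, m, t, b, a, z, hw', hw⟩)
    (fun o x i _ _ ⟨n, m, t, a, b, z, hw, hw'⟩ => by
      obtain ⟨T, hT⟩ := t.exists_interp_update_eval o x i
      exact ⟨n, m + S.arity o, T, a, b, Fin.append z x, hw ▸ hT _ z, hw' ▸ hT _ z⟩)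

theorem diagCon_r_diag (x y : C.carrier) : (diagCon C).r (x, x) (y, y) :=
  ReflTransGen.single ⟨1, 0, .var 0, ![x], ![y], Fin.elim0, rfl, rfl⟩

theorem fst_eq_snd_of_diagCon_r (hC : Centralizes C ⊤ ⊤ ⊥) {w w' : (C.prod C).carrier}
    (h : (diagCon C).r w w') (hw : w.1 = w.2) : w'.1 = w'.2 := by
  induction h with
  | refl => exact hw
  | tail _ hstep ih =>
    obtain ⟨n, m, t, a, b, z, rfl, rfl⟩ := hstep
    rw [STerm.eval_prod_append] at ih ⊢
    exact SCon.bot_r_iff.1 (hC n m t a b _ _ (fun _ => SCon.top_r _ _) (fun _ => SCon.top_r _ _)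
      (SCon.bot_r_iff.2 ih))

/-- Modularity moves a pair `(x, y) ~ (x, y')` to the diagonal pair `(y, y) ~ (y', y')`, and
in an abelian algebra no chain leaves the diagonal. -/
theorem diagCon_inf_ker_fst_eq_bot [IsModularLattice (SCon (C.prod C))]
    (hC : Centralizes C ⊤ ⊤ ⊥) : diagCon C ⊓ SCon.ker (SHom.fst C C) = ⊥ := by
  set Δ := diagCon C
  set η₂ := SCon.ker (SHom.snd C C)
  set G := Δ ⊓ SCon.ker (SHom.fst C C)
  refine SCon.eq_bot_of_r fun ⟨x, y⟩ ⟨x', y'⟩ hG => ?_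
  obtain ⟨-, rfl : x = x'⟩ := SCon.inf_r_iff.1 hG
  have hsup : (η₂ ⊔ G).r (y, y) (y', y') :=
    (η₂ ⊔ G).iseqv.trans (le_sup_left (a := η₂) (y, y) (x, y) rfl)
      ((η₂ ⊔ G).iseqv.trans (le_sup_right (a := η₂) _ _ hG) (le_sup_left (a := η₂) _ _ rfl))
  have key : ((G ⊔ η₂) ⊓ Δ).r (y, y) (y', y') :=
    SCon.inf_r_iff.2 ⟨sup_comm G η₂ ▸ hsup, diagCon_r_diag y y'⟩
  rw [sup_inf_assoc_of_le η₂ inf_le_left] at key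
  have hy : (y', y') = (y, y) := SCon.eq_of_sup_r
    (P := fun w : (C.prod C).carrier => w.1 = w.2)
    (fun w w' hw h => by
      obtain ⟨hΔ, h1 : w.1 = w'.1⟩ := SCon.inf_r_iff.1 h
      exact Prod.ext h1.symm
        ((fst_eq_snd_of_diagCon_r hC hΔ hw).symm.trans (h1.symm.trans hw)))
    (fun w w' hw h => by
      obtain ⟨h2 : w.2 = w'.2, hΔ⟩ := SCon.inf_r_iff.1 h
      exact Prod.ext ((fst_eq_snd_of_diagCon_r hC hΔ hw).trans (h2.symm.trans hw.symm))
        h2.symm)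
    rfl key
  cases congrArg Prod.fst hy
  rfl

end Diagonal

/-- The shifting argument: with `P x w = t(diag x, w)` in `D × D`, the pairs `P b uv`, `P a uv`,
`P a uu`, `P b uu` are linked by `Δ`, `γ`, `Δ`, and modularity gives `η ⊓ (γ ⊔ Δ) = γ`. -/
theorem centralizes_of_diag_inf_ker_fst {D : SAlgebra S} [IsModularLattice (SCon (D.prod D))]
    {α : SCon D} (Δ : SCon (D.prod D)) (hdiag : ∀ x y, α.r x y → Δ.r (x, x) (y, y))
    (hΔ : Δ ⊓ SCon.ker (SHom.fst D D) = ⊥) (δ : SCon D) : Centralizes D α ⊤ δ := by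
  intro n m t a b u v hab _ hp
  set η := SCon.ker (SHom.fst D D)
  set γ := η ⊓ SCon.comap (SHom.snd D D) δ
  have hmod : (γ ⊔ Δ) ⊓ η = γ := by rw [sup_inf_assoc_of_le Δ inf_le_left, hΔ, sup_bot_eq]
  let P : (Fin n → D.carrier) → (Fin m → (D.prod D).carrier) → (D.prod D).carrier :=
    fun x w => t.eval (D.prod D) (Fin.append ((SHom.diag D).toFun ∘ x) w)
  have hP : ∀ x w, P x w =
      (t.eval D (Fin.append x fun j => (w j).1), t.eval D (Fin.append x fun j => (w j).2)) :=
    fun x w => STerm.eval_prod_append t _ w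
  let uv : Fin m → (D.prod D).carrier := fun j => (u j, v j)
  let uu : Fin m → (D.prod D).carrier := (SHom.diag D).toFun ∘ u
  have hΔP : ∀ w, Δ.r (P b w) (P a w) := fun w =>
    Δ.eval_r t
      (Δ.append_r (fun i => hdiag _ _ (α.iseqv.symm (hab i))) fun j => Δ.iseqv.refl (w j))
  have hγ : γ.r (P a uv) (P a uu) := by
    refine SCon.inf_r_iff.2 ⟨?_, ?_⟩
    · show (P a uv).1 = (P a uu).1
      rw [hP, hP]
      rfl
    · show δ.r (P a uv).2 (P a uu).2
      rw [hP, hP]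
      exact δ.iseqv.symm hp
  have key : ((γ ⊔ Δ) ⊓ η).r (P b uv) (P b uu) := by
    refine SCon.inf_r_iff.2 ⟨?_, ?_⟩
    · exact (γ ⊔ Δ).iseqv.trans (le_sup_right (a := γ) _ _ (hΔP uv))
        ((γ ⊔ Δ).iseqv.trans (le_sup_left (b := Δ) _ _ hγ)
          (le_sup_right (a := γ) _ _ (Δ.iseqv.symm (hΔP uu))))
    · show (P b uv).1 = (P b uu).1
      rw [hP, hP]
      rfl
  rw [hmod] at key
  have hδ : δ.r (P b uv).2 (P b uu).2 := (SCon.inf_r_iff.1 key).2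
  rw [hP, hP] at hδ
  exact δ.iseqv.symm hδ

theorem Centralizes.top_top_of_bot {C : SAlgebra S} [IsModularLattice (SCon (C.prod C))]
    (hC : Centralizes C ⊤ ⊤ ⊥) (δ : SCon C) : Centralizes C ⊤ ⊤ δ :=
  centralizes_of_diag_inf_ker_fst (diagCon C) (fun x y _ => diagCon_r_diag x y)
    (diagCon_inf_ker_fst_eq_bot hC) δ

theorem Centralizes.quot_top_top {A : SAlgebra S} {ψ : SCon A} (hψ : Centralizes A ⊤ ⊤ ψ) :
    Centralizes (A.quot ψ) ⊤ ⊤ ⊥ :=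
  .of_comap (SHom.quotHom_surjective A ψ)
    (by rwa [SCon.comap_top, SCon.comap_bot, SCon.ker_quotHom])

theorem Centralizes.top_top_of_le {A : SAlgebra S} {ψ φ : SCon A}
    [IsModularLattice (SCon ((A.quot ψ).prod (A.quot ψ)))] (hψ : Centralizes A ⊤ ⊤ ψ)
    (hle : ψ ≤ φ) : Centralizes A ⊤ ⊤ φ := by
  have := (hψ.quot_top_top.top_top_of_bot (SCon.quotCon ψ φ hle)).comap (SHom.quotHom A ψ)
  rwa [SCon.comap_top, SCon.comap_quotHom_quotCon] at this

theorem centralizes_ker_fst_top {B C : SAlgebra S} [IsModularLattice (SCon (C.prod C))]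
    [IsModularLattice (SCon ((B.prod C).prod (B.prod C)))] (hC : Centralizes C ⊤ ⊤ ⊥)
    (δ : SCon (B.prod C)) : Centralizes (B.prod C) (SCon.ker (SHom.fst B C)) ⊤ δ := by
  let gB : SHom ((B.prod C).prod (B.prod C)) (B.prod B) :=
    ⟨fun w => (w.1.1, w.2.1), fun _ _ => rfl⟩
  let gC : SHom ((B.prod C).prod (B.prod C)) (C.prod C) :=
    ⟨fun w => (w.1.2, w.2.2), fun _ _ => rfl⟩
  refine centralizes_of_diag_inf_ker_fst (SCon.ker gB ⊓ SCon.comap gC (diagCon C))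
    (fun x y hxy => SCon.inf_r_iff.2 ⟨Prod.ext hxy hxy, diagCon_r_diag x.2 y.2⟩)
    (SCon.eq_bot_of_r fun w w' h => ?_) δ
  obtain ⟨hΔ, h1 : w.1 = w'.1⟩ := SCon.inf_r_iff.1 h
  obtain ⟨hB : (w.1.1, w.2.1) = (w'.1.1, w'.2.1),
    hC' : (diagCon C).r (w.1.2, w.2.2) (w'.1.2, w'.2.2)⟩ := SCon.inf_r_iff.1 hΔ
  have hC2 := SCon.bot_r_iff.1 <| (diagCon_inf_ker_fst_eq_bot hC).le _ _ <|
    SCon.inf_r_iff.2 ⟨hC', congrArg Prod.snd h1⟩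
  exact Prod.ext h1 (Prod.ext (Prod.ext_iff.1 hB).2 (Prod.ext_iff.1 hC2).2)

theorem IsVariety.quot {V : SAlgebra S → Prop} (hV : IsVariety V) {A : SAlgebra S} (hA : V A)
    (θ : SCon A) : V (A.quot θ) :=
  hV.2.1 A _ (SHom.quotHom A θ) (SHom.quotHom_surjective A θ) hA

theorem IsVariety.prod {V : SAlgebra S → Prop} (hV : IsVariety V) {A B : SAlgebra S} (hA : V A)
    (hB : V B) : V (A.prod B) := by
  let F : Bool → SAlgebra S := fun i => cond i A B
  let e : SHom (A.prod B) (SAlgebra.pi F) :=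
    ⟨fun x i => match i with | true => x.1 | false => x.2,
      fun _ _ => funext fun i => by cases i <;> rfl⟩
  exact hV.1 _ _ e (fun x y h => Prod.ext (congrFun h true) (congrFun h false))
    (hV.2.2 Bool F fun i => by cases i <;> assumption)

section Retraction

variable {A B C D X : SAlgebra S}

theorem SHom.pair_injective {f : SHom A B} {g : SHom A C} (h : SCon.ker f ⊓ SCon.ker g = ⊥) :
    Injective (SHom.pair f g).toFun := fun _ _ hxy =>
  SCon.bot_r_iff.1 (h ▸ SCon.inf_r_iff.2 ⟨(Prod.ext_iff.1 hxy).1, (Prod.ext_iff.1 hxy).2⟩)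

theorem SCon.comap_ker_eq_bot {e : SHom A D} {p : SHom D A}
    (hp : ∀ x, p.toFun (e.toFun x) = x) : SCon.comap e (SCon.ker p) = ⊥ :=
  SCon.eq_bot_of_r fun x y h => (hp x).symm.trans (h.trans (hp y))

theorem SHom.apply_retraction_eq {e : SHom A D} {p : SHom D A}
    (hp : ∀ x, p.toFun (e.toFun x) = x) {g : SHom D X} (hg : Surjective (g.comp e).toFun)
    (h : SCon.comap e (SCon.ker p ⊔ SCon.ker g) ≤ SCon.ker (g.comp e)) (d : D.carrier) :
    g.toFun (e.toFun (p.toFun d)) = g.toFun d := by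
  obtain ⟨a, ha⟩ := hg (g.toFun d)
  have hrel : (SCon.ker p ⊔ SCon.ker g).r (e.toFun (p.toFun d)) (e.toFun a) :=
    (SCon.ker p ⊔ SCon.ker g).iseqv.trans (le_sup_left (b := SCon.ker g) _ _ (hp (p.toFun d)))
      (le_sup_right (a := SCon.ker p) _ _ ha.symm)
  exact (h _ _ hrel).trans ha

theorem SHom.pair_surjective_of_retraction {q₁ : SHom A B} {q₂ : SHom A C}
    (hq₁ : Surjective q₁.toFun) (hq₂ : Surjective q₂.toFun) {p : SHom (B.prod C) A}
    (hp : ∀ x, p.toFun ((SHom.pair q₁ q₂).toFun x) = x)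
    (h₁ : SCon.comap (SHom.pair q₁ q₂) (SCon.ker p ⊔ SCon.ker (SHom.fst B C)) ≤ SCon.ker q₁)
    (h₂ : SCon.comap (SHom.pair q₁ q₂) (SCon.ker p ⊔ SCon.ker (SHom.snd B C)) ≤ SCon.ker q₂) :
    Surjective (SHom.pair q₁ q₂).toFun := fun d =>
  ⟨p.toFun d, Prod.ext (apply_retraction_eq hp (g := SHom.fst B C) hq₁ h₁ d)
    (apply_retraction_eq hp (g := SHom.snd B C) hq₂ h₂ d)⟩

theorem SCon.le_ker_fst_of_comap_sup_le {q₁ : SHom A B} (q₂ : SHom A C)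
    (hq₁ : Surjective q₁.toFun) {Θ : SCon (B.prod C)}
    (h : SCon.comap (SHom.pair q₁ q₂) (Θ ⊔ SCon.ker (SHom.fst B C)) ≤ SCon.ker q₁) :
    Θ ≤ SCon.ker (SHom.fst B C) := by
  intro d d' hd
  obtain ⟨a, ha⟩ := hq₁ d.1
  obtain ⟨b, hb⟩ := hq₁ d'.1
  set η := SCon.ker (SHom.fst B C)
  have hrel : (Θ ⊔ η).r ((SHom.pair q₁ q₂).toFun a) ((SHom.pair q₁ q₂).toFun b) :=
    (Θ ⊔ η).iseqv.trans (le_sup_right (a := Θ) _ _ ha)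
      ((Θ ⊔ η).iseqv.trans (le_sup_left (b := η) _ _ hd) (le_sup_right (a := Θ) _ _ hb.symm))
  exact ha.symm.trans ((h _ _ hrel).trans hb)

end Retraction

theorem bijective_pair_quotHom_of_isAbsoluteRetract {V : SAlgebra S → Prop}
    (hV : IsCongruenceModularVariety V) {A : SAlgebra S} (hA : V A) (har : IsAbsoluteRetract V A)
    {ψ : SCon A} (hψ : Centralizes A ⊤ ⊤ ψ) (hψζ : ψ ⊓ conCenter A = ⊥)
    (hmax : ∀ γ, γ ⊓ conCenter A = ⊥ → ψ ≤ γ → γ = ψ) :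
    Bijective (SHom.pair (SHom.quotHom A (conCenter A)) (SHom.quotHom A ψ)).toFun := by
  obtain ⟨hVar, hMod⟩ := hV
  set ζ := conCenter A
  set e := SHom.pair (SHom.quotHom A ζ) (SHom.quotHom A ψ)
  have hVD := hVar.prod (hVar.quot hA ζ) (hVar.quot hA ψ)
  have := hMod _ hVD
  have := hMod _ (hVar.prod (hVar.quot hA ψ) (hVar.quot hA ψ))
  have := hMod _ (hVar.prod hVD hVD)
  have hinj : Injective e.toFun :=
    SHom.pair_injective (by rw [SCon.ker_quotHom, SCon.ker_quotHom, inf_comm, hψζ])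
  obtain ⟨p, hp⟩ := har _ hVD e hinj
  have hΘ : SCon.comap e (SCon.ker p) = ⊥ := SCon.comap_ker_eq_bot hp
  have hζ : SCon.comap e (SCon.ker (SHom.fst _ _)) = ζ := SCon.ker_quotHom ζ
  have h₁ : SCon.comap e (SCon.ker p ⊔ SCon.ker (SHom.fst _ _)) ≤ ζ := by
    refine le_conCenter ?_
    have := ((Centralizes.self_left _ ⊤).sup
      (centralizes_ker_fst_top hψ.quot_top_top (SCon.ker p))).comap e
    rwa [SCon.comap_top, hΘ] at this
  have hΘ₁ := SCon.le_ker_fst_of_comap_sup_le _ (SHom.quotHom_surjective A ζ)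
    (h₁.trans (SCon.ker_quotHom ζ).ge)
  have h₂ : SCon.comap e (SCon.ker p ⊔ SCon.ker (SHom.snd _ _)) = ψ := by
    refine hmax _ ?_ fun x y hxy => le_sup_right (a := SCon.ker p) _ _ (SHom.quotHom_eq_iff.2 hxy)
    calc SCon.comap e (SCon.ker p ⊔ SCon.ker (SHom.snd _ _)) ⊓ ζ
        = SCon.comap e ((SCon.ker p ⊔ SCon.ker (SHom.snd _ _)) ⊓ SCon.ker (SHom.fst _ _)) := by
          rw [SCon.comap_inf, hζ]
      _ = ⊥ := by
          rw [sup_inf_assoc_of_le _ hΘ₁, inf_comm, SCon.ker_fst_inf_ker_snd_eq_bot, sup_bot_eq,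
            hΘ]
  exact ⟨hinj, SHom.pair_surjective_of_retraction (SHom.quotHom_surjective A ζ)
    (SHom.quotHom_surjective A ψ) hp (h₁.trans (SCon.ker_quotHom ζ).ge)
    (h₂.trans (SCon.ker_quotHom ψ).symm).le⟩

/-- An absolute retract in a congruence modular variety satisfying (C1) is the product
of a centerless algebra and an abelian algebra; in particular a directly indecomposable
absolute retract is centerless or abelian. -/
theorem AR_product_centerless_abelian {S : Signature}
    (V : SAlgebra S → Prop) (hV : IsCongruenceModularVariety V)
    (hC1 : ∀ B : SAlgebra S, V B → ∀ α β : SCon B,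
      α ⊓ conCommutator B β β = conCommutator B (α ⊓ β) β)
    (A : SAlgebra S) (hA : V A) (har : IsAbsoluteRetract V A) :
    (∃ (B C : SAlgebra S) (f : SHom A (B.prod C)), Function.Bijective f.toFun ∧
        conCenter B = ⊥ ∧ conCommutator C ⊤ ⊤ = ⊥) ∧
    ((∀ (B C : SAlgebra S) (f : SHom A (B.prod C)), Function.Bijective f.toFun →
        Subsingleton B.carrier ∨ Subsingleton C.carrier) →
      conCenter A = ⊥ ∨ conCommutator A ⊤ ⊤ = ⊥) := by
  have hC1A : ∀ α : SCon A, conCommutator A α ⊤ = α ⊓ conCommutator A ⊤ ⊤ := fun α => by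
    simpa using (hC1 A hA α ⊤).symm
  have hζ := conCenter_inf_conCommutator_top_eq_bot hC1A
  obtain ⟨ψ, hνψ, hψζ, hmax⟩ := SCon.exists_maximal_inf_eq_bot ((inf_comm _ _).trans hζ)
  have hVν := hV.1.quot hA (conCommutator A ⊤ ⊤)
  have := hV.2 _ (hV.1.prod hVν hVν)
  have hψ : Centralizes A ⊤ ⊤ ψ := (centralizes_conCommutator ⊤ ⊤).top_top_of_le hνψ
  have hbij := bijective_pair_quotHom_of_isAbsoluteRetract hV hA har hψ hψζ hmax
  refine ⟨⟨_, _, _, hbij, conCenter_quot_conCenter_eq_bot hC1A,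
    conCommutator_eq_bot_iff.2 hψ.quot_top_top⟩, fun hind => ?_⟩
  rcases hind _ _ _ hbij with hB | hC
  · rw [SCon.eq_top_of_subsingleton_quot hB, top_inf_eq] at hζ
    exact .inr hζ
  · rw [SCon.eq_top_of_subsingleton_quot hC, top_inf_eq] at hψζ
    exact .inl hψζ
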